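/- The sequence of ratios of consecutive unit-ball volumes is strictly decreasing: for every integer d ≥ 1, V_{d+1} · V_{d−1} < V_d², where V_d := π^{d/2}/Γ(d/2 + 1) and V_0 = 1. Equivalently, V_{d+1}/V_d < V_d/V_{d−1} for all d ≥ 1. -/
import Mathlib

open Real in
/-- Midpoint convexity of `log ∘ Γ` on the positive reals. -/
lemma logGamma_midpoint {a c : ℝ} (ha : 0 < a) (hc : 0 < c) :
    Real.log (Real.Gamma ((a + c) / 2)) ≤
      (Real.log (Real.Gamma a) + Real.log (Real.Gamma c)) / 2 := by
  have h := Real.convexOn_log_Gamma.2 (Set.mem_Ioi.2 ha) (Set.mem_Ioi.2 hc)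
    (by norm_num : (0:ℝ) ≤ 1/2) (by norm_num : (0:ℝ) ≤ 1/2) (by norm_num)
  simp only [Function.comp_apply, smul_eq_mul] at h
  have e1 : (1/2:ℝ) * a + (1/2:ℝ) * c = (a + c) / 2 := by ring
  rw [e1] at h
  linarith

/-- Strict log-convexity of `Γ` at half-integer spaced points:
`Γ(x)² < Γ(x - 1/2) · Γ(x + 1/2)` for `x > 1/2`. -/
lemma gamma_sq_lt {x : ℝ} (hx : 1/2 < x) :
    Real.Gamma x ^ 2 < Real.Gamma (x - 1/2) * Real.Gamma (x + 1/2) := by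
  have ha : 0 < x - 1/2 := by linarith
  have hx0 : 0 < x := by linarith
  have hc : 0 < x + 1/2 := by linarith
  have hmid : (x - 1/2 + (x + 1/2)) / 2 = x := by ring
  have hGa := Real.Gamma_pos_of_pos ha
  have hGc := Real.Gamma_pos_of_pos hc
  have hGx := Real.Gamma_pos_of_pos hx0
  have hle : Real.Gamma x ^ 2 ≤ Real.Gamma (x - 1/2) * Real.Gamma (x + 1/2) := by
    have h := logGamma_midpoint ha hc
    rw [hmid] at h
    rw [← Real.log_le_log_iff (by positivity) (by positivity),
      Real.log_pow, Real.log_mul hGa.ne' hGc.ne']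
    push_cast
    linarith
  rcases lt_or_eq_of_le hle with h | heq
  · exact h
  exfalso
  have key := logGamma_midpoint (by linarith : (0:ℝ) < x - 1/2 + 1)
    (by linarith : (0:ℝ) < x + 1/2 + 1)
  have hmid2 : (x - 1/2 + 1 + (x + 1/2 + 1)) / 2 = x + 1 := by ring
  rw [hmid2, Real.Gamma_add_one ha.ne', Real.Gamma_add_one hc.ne',
    Real.Gamma_add_one hx0.ne', Real.log_mul ha.ne' hGa.ne',
    Real.log_mul hc.ne' hGc.ne', Real.log_mul hx0.ne' hGx.ne'] at key
  have hlogeq : 2 * Real.log (Real.Gamma x)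
      = Real.log (Real.Gamma (x - 1/2)) + Real.log (Real.Gamma (x + 1/2)) := by
    have h2 : Real.log (Real.Gamma x ^ 2)
        = Real.log (Real.Gamma (x - 1/2) * Real.Gamma (x + 1/2)) := by rw [heq]
    rw [Real.log_pow, Real.log_mul hGa.ne' hGc.ne'] at h2
    push_cast at h2; linarith
  have hlogx : Real.log x ≤ (Real.log (x - 1/2) + Real.log (x + 1/2)) / 2 := by linarith
  have hgt : (Real.log (x - 1/2) + Real.log (x + 1/2)) / 2 < Real.log x := by
    have hac : (x - 1/2) * (x + 1/2) < x ^ 2 := by nlinarith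
    have h3 := (Real.log_lt_log_iff (by positivity) (by positivity)).mpr hac
    rw [Real.log_mul ha.ne' hc.ne', Real.log_pow] at h3
    push_cast at h3; linarith
  linarith



/-- `V_d = π^{d/2} / Γ(d/2 + 1)`, the Lebesgue volume of the `d`-dimensional
Euclidean unit ball (with `V_0 = 1`). -/
noncomputable def unitBallVol (d : ℕ) : ℝ :=
  Real.pi ^ ((d : ℝ) / 2) / Real.Gamma ((d : ℝ) / 2 + 1)

lemma unitBallVol_pos (n : ℕ) : 0 < unitBallVol n := by
  unfold unitBallVol
  exact div_pos (Real.rpow_pos_of_pos Real.pi_pos _)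
    (Real.Gamma_pos_of_pos (by positivity))

/-- The sequence of ratios of consecutive unit-ball volumes is
strictly decreasing: for every `d ≥ 1`, `V_{d+1} · V_{d-1} < V_d²`, equivalently
`V_{d+1}/V_d < V_d/V_{d-1}`. -/
theorem unitBallVol_ratio_strict_anti (d : ℕ) (hd : 1 ≤ d) :
    unitBallVol (d + 1) * unitBallVol (d - 1) < unitBallVol d ^ 2 ∧
    unitBallVol (d + 1) / unitBallVol d < unitBallVol d / unitBallVol (d - 1) := by
  have hd1 : ((d - 1 : ℕ) : ℝ) = (d : ℝ) - 1 := by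
    push_cast [Nat.cast_sub hd]; ring
  have hdR : (1:ℝ) ≤ (d:ℝ) := by exact_mod_cast hd
  have key := gamma_sq_lt (x := (d:ℝ)/2 + 1) (by linarith)
  have ea : (d:ℝ)/2 + 1 - 1/2 = ((d:ℝ) - 1)/2 + 1 := by ring
  have ec : (d:ℝ)/2 + 1 + 1/2 = ((d:ℝ) + 1)/2 + 1 := by ring
  rw [ea, ec] at key
  have hGx := Real.Gamma_pos_of_pos (show (0:ℝ) < (d:ℝ)/2 + 1 by positivity)
  have hGa := Real.Gamma_pos_of_pos (show (0:ℝ) < ((d:ℝ) - 1)/2 + 1 by linarith)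
  have hGc := Real.Gamma_pos_of_pos (show (0:ℝ) < ((d:ℝ) + 1)/2 + 1 by positivity)
  have hpow : Real.pi ^ (((d:ℝ) + 1)/2) * Real.pi ^ (((d:ℝ) - 1)/2)
      = (Real.pi ^ ((d:ℝ)/2)) ^ 2 := by
    rw [sq, ← Real.rpow_add Real.pi_pos, ← Real.rpow_add Real.pi_pos]
    ring_nf
  have main : unitBallVol (d + 1) * unitBallVol (d - 1) < unitBallVol d ^ 2 := by
    unfold unitBallVol
    rw [hd1]
    push_cast
    rw [div_mul_div_comm, div_pow, hpow]
    rw [mul_comm] at key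
    exact div_lt_div_of_pos_left (by positivity) (by positivity) key
  refine ⟨main, ?_⟩
  rw [div_lt_div_iff₀ (unitBallVol_pos d) (unitBallVol_pos (d - 1))]
  calc unitBallVol (d + 1) * unitBallVol (d - 1) < unitBallVol d ^ 2 := main
    _ = unitBallVol d * unitBallVol d := sq (unitBallVol d)
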